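/- Let a ∈ ℝ with 0 < a < 1 and λ ∈ [0,1). Then the improper integral ∫₀¹ t^{1−a}(1−t)^{a−1}(1−λt)^{−1−a} dt converges and equals (Γ(a)·Γ(1−a)/a)·F_a′(λ), where F_a(λ) = Σ_{i≥0} ((a)_i (1−a)_i / (i!)²) λ^i and F_a′ is its derivative. (This is the period integral ∫_e η_n = B(2−a,a)·₂F₁(1+a,2−a,2;λ) = (N/n)·B(a,1−a)·F_n′(λ) with a = n/N used in the paper.) -/

import Mathlib

/-- The (convergent, for `|x| < 1`) hypergeometric function
`₂F₁(a, 1-a; 1; x) = Σ_{i≥0} ((a)_i (1-a)_i / (i!)²) x^i` as a real function. -/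
noncomputable def hypFR (a : ℝ) (x : ℝ) : ℝ :=
  ∑' i : ℕ,
    ((ascPochhammer ℝ i).eval a * (ascPochhammer ℝ i).eval (1 - a)
      / ((i.factorial : ℝ)) ^ 2) * x ^ i

/-!
Expand `(1 - λt)^(-1-a) = Σ_k (1+a)_k / k! · (λt)^k` by the binomial series. All terms are
nonnegative on `(0, 1]`, so the series may be integrated termwise, and the `k`-th term becomes a
Beta integral `B(2 - a + k, a) = Γ(2 - a + k) Γ(a) / (k + 1)!`. Writing `Γ(2 - a + k)` as
`(2 - a)_k (1 - a) Γ(1 - a)`, that term is `Γ(a) Γ(1 - a) / a` times `(k + 1) c_{k+1} λ^k`, where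
`c_i = (a)_i (1 - a)_i / (i!)²`; these are the coefficients of the termwise derivative of `F_a`.
-/

open Polynomial MeasureTheory Set
open scoped Nat

section Pochhammer

variable {S : Type*} [Semiring S] [PartialOrder S] [IsStrictOrderedRing S]

theorem ascPochhammer_eval_nonneg {x : S} (hx : 0 ≤ x) (n : ℕ) :
    0 ≤ (ascPochhammer S n).eval x := by
  induction n with
  | zero => simp
  | succ n ih => rw [ascPochhammer_succ_eval]; positivity

theorem ascPochhammer_eval_le_eval {x y : S} (hx : 0 ≤ x) (hxy : x ≤ y) (n : ℕ) :
    (ascPochhammer S n).eval x ≤ (ascPochhammer S n).eval y := by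
  induction n with
  | zero => simp
  | succ n ih =>
    simp only [ascPochhammer_succ_eval]
    exact mul_le_mul ih (by gcongr) (by positivity) (ascPochhammer_eval_nonneg (hx.trans hxy) n)

theorem ascPochhammer_eval_le_factorial {x : S} (hx0 : 0 ≤ x) (hx1 : x ≤ 1) (n : ℕ) :
    (ascPochhammer S n).eval x ≤ n ! := by
  simpa [← ascPochhammer_nat_eq_natCast_ascFactorial] using
    ascPochhammer_eval_le_eval hx0 hx1 n

end Pochhammer

theorem Real.Gamma_add_nat_eq_ascPochhammer_eval_mul {x : ℝ} (hx : 0 < x) (n : ℕ) :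
    Real.Gamma (x + n) = (ascPochhammer ℝ n).eval x * Real.Gamma x := by
  induction n with
  | zero => simp
  | succ n ih =>
    rw [Nat.cast_succ, ← add_assoc, Real.Gamma_add_one (by positivity), ih,
      ascPochhammer_succ_eval]
    ring

theorem Ring.choose_add_sub_one_eq_ascPochhammer_div_factorial {R : Type*} [Field R] [CharZero R]
    (a : R) (n : ℕ) : Ring.choose (a + n - 1) n = (ascPochhammer R n).eval a / n ! := by
  rw [Ring.choose_eq_smul, descPochhammer_smeval_eq_ascPochhammer, ascPochhammer_smeval_eq_eval,
    smul_eq_mul, inv_mul_eq_div]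
  ring_nf

theorem Real.hasSum_one_sub_rpow_neg (a : ℝ) {x : ℝ} (hx : |x| < 1) :
    HasSum (fun n ↦ (ascPochhammer ℝ n).eval a / n ! * x ^ n) ((1 - x) ^ (-a)) := by
  have h := (Real.one_div_one_sub_rpow_hasFPowerSeriesOnBall_zero a).hasSum (y := x)
    (by rwa [mem_eball_zero_iff, ← ofReal_norm, ENNReal.ofReal_lt_one])
  have h1x : 0 ≤ 1 - x := by linarith [le_abs_self x]
  simpa [FormalMultilinearSeries.ofScalars_apply_eq,
    Ring.choose_add_sub_one_eq_ascPochhammer_div_factorial, Real.rpow_neg h1x, mul_comm] using h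

theorem Complex.ofReal_betaIntegrand {u v t : ℝ} (ht : t ∈ Icc (0 : ℝ) 1) :
    ((t ^ (u - 1) * (1 - t) ^ (v - 1) : ℝ) : ℂ) =
      (t : ℂ) ^ ((u : ℂ) - 1) * (1 - (t : ℂ)) ^ ((v : ℂ) - 1) := by
  rw [Complex.ofReal_mul, Complex.ofReal_cpow ht.1, Complex.ofReal_cpow (sub_nonneg.2 ht.2)]
  push_cast
  rfl

theorem intervalIntegrable_rpow_mul_one_sub_rpow {u v : ℝ} (hu : 0 < u) (hv : 0 < v) :
    IntervalIntegrable (fun t : ℝ ↦ t ^ (u - 1) * (1 - t) ^ (v - 1)) volume 0 1 := by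
  have h := Complex.betaIntegral_convergent (u := u) (v := v) (by simpa) (by simpa)
  rw [intervalIntegrable_iff_integrableOn_Icc_of_le zero_le_one] at h ⊢
  refine IntegrableOn.congr_fun (Integrable.re h) (fun t ht ↦ ?_) measurableSet_Icc
  simp [← Complex.ofReal_betaIntegrand ht]

theorem integral_rpow_mul_one_sub_rpow {u v : ℝ} (hu : 0 < u) (hv : 0 < v) :
    ∫ t in (0 : ℝ)..1, t ^ (u - 1) * (1 - t) ^ (v - 1) =
      Real.Gamma u * Real.Gamma v / Real.Gamma (u + v) := by
  have h := Complex.betaIntegral_eq_Gamma_mul_div u v (by simpa) (by simpa)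
  rw [Complex.betaIntegral, ← intervalIntegral.integral_congr (fun t ht ↦
      Complex.ofReal_betaIntegrand (by rwa [uIcc_of_le zero_le_one] at ht)),
    intervalIntegral.integral_ofReal, ← Complex.ofReal_add, Complex.Gamma_ofReal,
    Complex.Gamma_ofReal, Complex.Gamma_ofReal] at h
  exact_mod_cast h

theorem summable_natCast_add_one_mul_geometric {r : ℝ} (hr0 : 0 ≤ r) (hr1 : r < 1) :
    Summable fun n : ℕ ↦ ((n : ℝ) + 1) * r ^ n := by
  have h := (summable_pow_mul_geometric_of_norm_lt_one 1
    (by rwa [Real.norm_of_nonneg hr0])).add (summable_geometric_of_lt_one hr0 hr1)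
  simpa [add_mul] using h

section PowerSeries

variable {𝕜 : Type*} [RCLike 𝕜] {c : ℕ → 𝕜} {C : ℝ}

theorem summable_mul_pow_of_norm_le (hc : ∀ n, ‖c n‖ ≤ C) {x : 𝕜} (hx : ‖x‖ < 1) :
    Summable fun n ↦ c n * x ^ n :=
  .of_norm_bounded ((summable_geometric_of_lt_one (norm_nonneg x) hx).mul_left C) fun n ↦ by
    rw [norm_mul, norm_pow]
    exact mul_le_mul_of_nonneg_right (hc n) (by positivity)

theorem norm_succ_mul_coeff_mul_pow_le (hc : ∀ n, ‖c n‖ ≤ C) (n : ℕ) (y : 𝕜) :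
    ‖(n + 1) * c (n + 1) * y ^ n‖ ≤ C * ((n + 1) * ‖y‖ ^ n) := by
  have hn : ‖(n : 𝕜) + 1‖ = n + 1 := by simpa using RCLike.norm_natCast (K := 𝕜) (n + 1)
  rw [norm_mul, norm_mul, norm_pow, hn, mul_comm _ ‖c _‖, mul_assoc]
  gcongr
  exact hc _

theorem summable_succ_mul_coeff_mul_pow (hc : ∀ n, ‖c n‖ ≤ C) {x : 𝕜} (hx : ‖x‖ < 1) :
    Summable fun n ↦ (n + 1) * c (n + 1) * x ^ n :=
  .of_norm_bounded ((summable_natCast_add_one_mul_geometric (norm_nonneg x) hx).mul_left C)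
    (norm_succ_mul_coeff_mul_pow_le hc · x)

theorem hasDerivAt_tsum_mul_pow (hc : ∀ n, ‖c n‖ ≤ C) {x : 𝕜} (hx : ‖x‖ < 1) :
    HasDerivAt (fun y ↦ ∑' n, c n * y ^ n) (∑' n, (n + 1) * c (n + 1) * x ^ n) x := by
  obtain ⟨r, hxr, hr1⟩ := exists_between hx
  have hr0 : 0 < r := (norm_nonneg x).trans_lt hxr
  have hderiv := (hasDerivAt_tsum_of_isPreconnected (t := Metric.ball 0 r) (y₀ := 0)
    (g := fun n y ↦ c (n + 1) * y ^ (n + 1)) (g' := fun n y ↦ (n + 1) * c (n + 1) * y ^ n)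
    ((summable_natCast_add_one_mul_geometric hr0.le hr1).mul_left C)
    Metric.isOpen_ball (convex_ball 0 r).isPreconnected
    (fun n y _ ↦ by
      simpa [mul_comm, mul_assoc] using (hasDerivAt_pow (n + 1) y).const_mul (c (n + 1)))
    (fun n y hy ↦ ?_) (Metric.mem_ball_self hr0) (by simp)
    (mem_ball_zero_iff.2 hxr)).const_add (c 0)
  · refine hderiv.congr_of_eventuallyEq ?_
    filter_upwards [Metric.isOpen_ball.mem_nhds (mem_ball_zero_iff.2 hx)] with y hy
    simpa using (summable_mul_pow_of_norm_le hc (mem_ball_zero_iff.1 hy)).tsum_eq_zero_add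
  · refine (norm_succ_mul_coeff_mul_pow_le hc n y).trans ?_
    have := (norm_nonneg _).trans (hc 0)
    gcongr
    exact (mem_ball_zero_iff.1 hy).le

end PowerSeries

noncomputable def hypCoeff (a : ℝ) (i : ℕ) : ℝ :=
  (ascPochhammer ℝ i).eval a * (ascPochhammer ℝ i).eval (1 - a) / (i ! : ℝ) ^ 2

theorem norm_hypCoeff_le_one {a : ℝ} (ha0 : 0 ≤ a) (ha1 : a ≤ 1) (i : ℕ) :
    ‖hypCoeff a i‖ ≤ 1 := by
  have h1 := ascPochhammer_eval_nonneg ha0 i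
  have h2 := ascPochhammer_eval_nonneg (sub_nonneg.2 ha1) i
  rw [hypCoeff, Real.norm_of_nonneg (by positivity), div_le_one (by positivity), sq]
  exact mul_le_mul (ascPochhammer_eval_le_factorial ha0 ha1 i)
    (ascPochhammer_eval_le_factorial (by linarith) (by linarith) i) h2 (by positivity)

theorem hasDerivAt_hypFR {a : ℝ} (ha0 : 0 ≤ a) (ha1 : a ≤ 1) {x : ℝ} (hx : |x| < 1) :
    HasDerivAt (hypFR a) (∑' k, (k + 1) * hypCoeff a (k + 1) * x ^ k) x :=
  hasDerivAt_tsum_mul_pow (norm_hypCoeff_le_one ha0 ha1) hx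

theorem ascPochhammer_mul_betaIntegral_eq_hypCoeff_succ {a : ℝ} (ha0 : 0 < a) (ha1 : a < 1)
    (k : ℕ) :
    (ascPochhammer ℝ k).eval (1 + a) / k ! *
        ∫ t in (0 : ℝ)..1, t ^ (2 - a + k - 1) * (1 - t) ^ (a - 1) =
      Real.Gamma a * Real.Gamma (1 - a) / a * ((k + 1) * hypCoeff a (k + 1)) := by
  have hk : (0 : ℝ) ≤ k := k.cast_nonneg
  rw [integral_rpow_mul_one_sub_rpow (by linarith) ha0,
    show (2 - a + k : ℝ) = (1 - a + 1) + k by ring,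
    Real.Gamma_add_nat_eq_ascPochhammer_eval_mul (by linarith),
    Real.Gamma_add_one (by linarith),
    show (1 - a + 1 + k + a : ℝ) = (k + 1 : ℕ) + 1 by push_cast; ring, Real.Gamma_nat_eq_factorial,
    hypCoeff, ascPochhammer_succ_left]
  simp only [eval_mul, eval_X, eval_comp, eval_add, eval_one, Nat.factorial_succ, Nat.cast_mul]
  have := Real.Gamma_pos_of_pos ha0
  field_simp
  push_cast
  ring_nf

theorem hasSum_period_integral {a l : ℝ} (ha0 : 0 < a) (ha1 : a < 1) (hl0 : 0 ≤ l) (hl1 : l < 1) :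
    HasSum (fun k : ℕ ↦
        Real.Gamma a * Real.Gamma (1 - a) / a * ((k + 1) * hypCoeff a (k + 1) * l ^ k))
      (∫ t in (0 : ℝ)..1, t ^ (1 - a) * (1 - t) ^ (a - 1) * (1 - l * t) ^ (-1 - a)) := by
  set F : ℕ → ℝ → ℝ := fun k t ↦
    (ascPochhammer ℝ k).eval (1 + a) / k ! * l ^ k * (t ^ (2 - a + k - 1) * (1 - t) ^ (a - 1))
  have hF_int : ∀ k, IntegrableOn (F k) (Ioc 0 1) := fun k ↦
    ((intervalIntegrable_rpow_mul_one_sub_rpow (by linarith [k.cast_nonneg (α := ℝ)]) ha0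
      ).1.const_mul _)
  have hF_integral : ∀ k, ∫ t in Ioc 0 1, F k t =
      Real.Gamma a * Real.Gamma (1 - a) / a * ((k + 1) * hypCoeff a (k + 1) * l ^ k) := fun k ↦ by
    rw [integral_const_mul, ← intervalIntegral.integral_of_le zero_le_one, mul_right_comm,
      ascPochhammer_mul_betaIntegral_eq_hypCoeff_succ ha0 ha1]
    ring
  have hF_nonneg : ∀ k, ∀ t ∈ Ioc (0 : ℝ) 1, 0 ≤ F k t := fun k t ht ↦ by
    have := ascPochhammer_eval_nonneg (by linarith : 0 ≤ 1 + a) k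
    have := Real.rpow_nonneg ht.1.le (2 - a + k - 1)
    have := Real.rpow_nonneg (sub_nonneg.2 ht.2) (a - 1)
    positivity
  have hF_sum : ∀ t ∈ Ioc (0 : ℝ) 1,
      HasSum (F · t) (t ^ (1 - a) * (1 - t) ^ (a - 1) * (1 - l * t) ^ (-1 - a)) := fun t ht ↦ by
    have hlt : |l * t| < 1 := by
      rw [abs_of_nonneg (by nlinarith [ht.1])]; nlinarith [ht.1, ht.2]
    rw [show (-1 - a : ℝ) = -(1 + a) by ring]
    refine ((Real.hasSum_one_sub_rpow_neg (1 + a) hlt).mul_left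
      (t ^ (1 - a) * (1 - t) ^ (a - 1))).congr_fun fun k ↦ ?_
    simp only [F]
    rw [show (2 - a + k - 1 : ℝ) = 1 - a + k by ring, Real.rpow_add ht.1, Real.rpow_natCast,
      mul_pow]
    ring
  have hF_summable : Summable fun k ↦ ∫ t in Ioc 0 1, ‖F k t‖ := by
    refine ((summable_succ_mul_coeff_mul_pow (norm_hypCoeff_le_one ha0.le ha1.le)
      (by rwa [Real.norm_of_nonneg hl0])).mul_left
      (Real.Gamma a * Real.Gamma (1 - a) / a)).congr fun k ↦ ?_
    rw [setIntegral_congr_fun measurableSet_Ioc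
      fun t ht ↦ Real.norm_of_nonneg (hF_nonneg k t ht), hF_integral]
  rw [intervalIntegral.integral_of_le zero_le_one,
    setIntegral_congr_fun measurableSet_Ioc fun t ht ↦ (hF_sum t ht).tsum_eq.symm]
  exact (hasSum_integral_of_summable_integral_norm hF_int hF_summable).congr_fun
    fun k ↦ (hF_integral k).symm

/-- For `0 < a < 1` and `0 ≤ λ < 1`, the period integral
`∫₀¹ t^{1-a}(1-t)^{a-1}(1-λt)^{-1-a} dt` converges and equals
`(Γ(a)Γ(1-a)/a)·F_a′(λ)`. -/
theorem period_integral_eta (a : ℝ) (ha0 : 0 < a) (ha1 : a < 1)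
    (l : ℝ) (hl0 : 0 ≤ l) (hl1 : l < 1) :
    IntervalIntegrable
        (fun t : ℝ => t ^ (1 - a) * (1 - t) ^ (a - 1) * (1 - l * t) ^ (-1 - a))
        MeasureTheory.volume 0 1 ∧
    (∫ t in (0:ℝ)..1, t ^ (1 - a) * (1 - t) ^ (a - 1) * (1 - l * t) ^ (-1 - a))
      = Real.Gamma a * Real.Gamma (1 - a) / a * deriv (hypFR a) l := by
  refine ⟨?_, ?_⟩
  · have hbeta := intervalIntegrable_rpow_mul_one_sub_rpow (u := 2 - a) (by linarith) ha0
    rw [show (2 - a - 1 : ℝ) = 1 - a by ring] at hbeta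
    refine hbeta.mul_continuousOn (ContinuousOn.rpow_const (by fun_prop) fun t ht ↦ Or.inl ?_)
    rw [uIcc_of_le zero_le_one] at ht
    nlinarith [ht.1, ht.2]
  · rw [(hasDerivAt_hypFR ha0.le ha1.le (by rwa [abs_of_nonneg hl0])).deriv, ← tsum_mul_left]
    exact (hasSum_period_integral ha0 ha1 hl0 hl1).tsum_eq.symm
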